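/- Let α > 0 and let E = {x_1, …, x_N} be a sorted 2d Pareto front with N ≥ 2. Then the minimum of f_α(P₁) + f_α(P₂) over all partitions of E into two nonempty subsets P₁, P₂ equals min over j ∈ [1, N−1] of f_α(C_{1,j}) + f_α(C_{j+1,N}). -/
import Mathlib


open scoped Classical

/-- Points of the plane with the Euclidean structure. -/
abbrev E2 := EuclideanSpace ℝ (Fin 2)

/-- The `α`-medoid cost `f_α(P) = min_{y ∈ P} Σ_{x ∈ P} ‖x − y‖^α` of a finite set `P`. -/
noncomputable def fCost (α : ℝ) (P : Finset E2) : ℝ :=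
  sInf ((fun y => ∑ z ∈ P, dist z y ^ α) '' ↑P)

/-- The interval cluster `C_{i,i'} = {x j : i ≤ j ≤ i'}`. -/
noncomputable def C (x : ℕ → E2) (i i' : ℕ) : Finset E2 := (Finset.Icc i i').image x


lemma fCost_nonneg (α : ℝ) (P : Finset E2) : 0 ≤ fCost α P := by
  apply Real.sInf_nonneg
  rintro v ⟨y, hy, rfl⟩
  exact Finset.sum_nonneg fun z _ => Real.rpow_nonneg dist_nonneg α

lemma fCost_le (α : ℝ) {P : Finset E2} {y : E2} (hy : y ∈ P) :
    fCost α P ≤ ∑ z ∈ P, dist z y ^ α := by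
  apply csInf_le ((P.finite_toSet.image _).bddBelow)
  exact Set.mem_image_of_mem _ hy

lemma exists_medoid (α : ℝ) {P : Finset E2} (hP : P.Nonempty) :
    ∃ y ∈ P, fCost α P = ∑ z ∈ P, dist z y ^ α := by
  have hfin : ((fun y => ∑ z ∈ P, dist z y ^ α) '' ↑P).Finite := P.finite_toSet.image _
  have hne : ((fun y => ∑ z ∈ P, dist z y ^ α) '' ↑P).Nonempty :=
    (hP.to_set).image _
  obtain ⟨y, hy, hval⟩ := hne.csInf_mem hfin
  exact ⟨y, hy, hval.symm⟩

lemma sum_split {Eset Q₁ Q₂ : Finset E2} (hd : Disjoint Q₁ Q₂) (hu : Q₁ ∪ Q₂ = Eset)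
    (g₁ g₂ : E2 → ℝ) :
    ∑ z ∈ Q₁, g₁ z + ∑ z ∈ Q₂, g₂ z = ∑ z ∈ Eset, if z ∈ Q₁ then g₁ z else g₂ z := by
  subst hu
  rw [Finset.sum_union hd]
  congr 1
  · exact Finset.sum_congr rfl fun z hz => (if_pos hz).symm
  · exact Finset.sum_congr rfl fun z hz => (if_neg (Finset.disjoint_right.mp hd hz)).symm

lemma distsq (z y : E2) : dist z y ^ 2 = (z 0 - y 0) ^ 2 + (z 1 - y 1) ^ 2 := by
  rw [EuclideanSpace.dist_eq, Real.sq_sqrt (by positivity)]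
  simp [Fin.sum_univ_two, Real.dist_eq, sq_abs]

lemma C_disjoint (N : ℕ) (x : ℕ → E2)
    (hsort : ∀ i j, 1 ≤ i → i < j → j ≤ N → x i 0 < x j 0 ∧ x j 1 < x i 1)
    (j : ℕ) (hjN : j ≤ N) : Disjoint (C x 1 j) (C x (j + 1) N) := by
  rw [Finset.disjoint_left]
  rintro z hz1 hz2
  obtain ⟨i, hi, rfl⟩ := Finset.mem_image.mp hz1
  obtain ⟨i', hi', he⟩ := Finset.mem_image.mp hz2
  rw [Finset.mem_Icc] at hi hi'
  have h := (hsort i i' hi.1 (by omega) hi'.2).1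
  rw [he] at h
  exact lt_irrefl _ h

lemma C_union (N : ℕ) (x : ℕ → E2) (j : ℕ) (hj1 : 1 ≤ j) (hjN : j ≤ N) :
    C x 1 j ∪ C x (j + 1) N = (Finset.Icc 1 N).image x := by
  rw [C, C, ← Finset.image_union]
  congr 1
  ext i
  simp only [Finset.mem_union, Finset.mem_Icc]
  omega

lemma core (α : ℝ) (hα : 0 < α) (N : ℕ) (x : ℕ → E2)
    (hsort : ∀ i j, 1 ≤ i → i < j → j ≤ N → x i 0 < x j 0 ∧ x j 1 < x i 1)
    (P₁ P₂ : Finset E2) (hd : Disjoint P₁ P₂)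
    (hu : P₁ ∪ P₂ = (Finset.Icc 1 N).image x)
    (a b : ℕ) (ha : a ∈ Finset.Icc 1 N) (hb : b ∈ Finset.Icc 1 N) (hab : a < b)
    (ha1 : x a ∈ P₁) (hb2 : x b ∈ P₂) :
    ∃ j, 1 ≤ j ∧ j ≤ N - 1 ∧
      fCost α (C x 1 j) + fCost α (C x (j + 1) N) ≤
        ∑ z ∈ P₁, dist z (x a) ^ α + ∑ z ∈ P₂, dist z (x b) ^ α := by
  rw [Finset.mem_Icc] at ha hb
  set D : ℕ → ℝ := fun i => dist (x i) (x a) ^ 2 - dist (x i) (x b) ^ 2 with hD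
  -- monotonicity of D
  have hmono : ∀ i i', 1 ≤ i → i ≤ i' → i' ≤ N → D i ≤ D i' := by
    intro i i' hi1 hii' hi'N
    rcases eq_or_lt_of_le hii' with rfl | hlt
    · exact le_rfl
    have h1 := hsort i i' hi1 hlt hi'N
    have h2 := hsort a b ha.1 hab hb.2
    simp only [hD, distsq]
    nlinarith [h1.1, h1.2, h2.1, h2.2]
  have hDa : D a ≤ 0 := by
    simp only [hD, dist_self]
    nlinarith [dist_nonneg (x := x a) (y := x b), sq_nonneg (dist (x a) (x b))]
  have hxab : x a ≠ x b := by
    intro h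
    have := (hsort a b ha.1 hab hb.2).1
    rw [h] at this; exact lt_irrefl _ this
  have hDb : 0 < D b := by
    simp only [hD, dist_self]
    have h : 0 < dist (x b) (x a) := dist_pos.mpr fun h => hxab h.symm
    nlinarith [h]
  set F := (Finset.Icc 1 N).filter (fun i => D i ≤ 0) with hF
  have haF : a ∈ F := by
    rw [hF, Finset.mem_filter, Finset.mem_Icc]; exact ⟨⟨ha.1, ha.2⟩, hDa⟩
  set j := F.max' ⟨a, haF⟩ with hj
  have hjF : j ∈ F := F.max'_mem _
  rw [hF, Finset.mem_filter, Finset.mem_Icc] at hjF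
  have haj : a ≤ j := Finset.le_max' F a haF
  have hjb : j < b := by
    by_contra h
    push_neg at h
    have := hmono b j hb.1 h hjF.1.2
    linarith [hjF.2]
  have hj1 : 1 ≤ j := hjF.1.1
  have hjN1 : j ≤ N - 1 := by omega
  have hjN : j ≤ N := by omega
  refine ⟨j, hj1, hjN1, ?_⟩
  -- memberships
  have hxaC : x a ∈ C x 1 j := Finset.mem_image_of_mem x (Finset.mem_Icc.mpr ⟨ha.1, haj⟩)
  have hxbC : x b ∈ C x (j + 1) N := Finset.mem_image_of_mem x (Finset.mem_Icc.mpr ⟨by omega, hb.2⟩)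
  -- distance comparisons
  have hleft : ∀ i, 1 ≤ i → i ≤ j → dist (x i) (x a) ^ α ≤ dist (x i) (x b) ^ α := by
    intro i hi1 hij
    have hDi : D i ≤ 0 := le_trans (hmono i j hi1 hij hjN) hjF.2
    have : dist (x i) (x a) ≤ dist (x i) (x b) := by
      have h1 : dist (x i) (x a) ^ 2 ≤ dist (x i) (x b) ^ 2 := by simp only [hD] at hDi; linarith
      nlinarith [dist_nonneg (x := x i) (y := x a), dist_nonneg (x := x i) (y := x b)]
    exact Real.rpow_le_rpow dist_nonneg this hα.le
  have hright : ∀ i, j < i → i ≤ N → dist (x i) (x b) ^ α ≤ dist (x i) (x a) ^ α := by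
    intro i hji hiN
    have hDi : 0 < D i := by
      by_contra h
      push_neg at h
      have : i ∈ F := by rw [hF, Finset.mem_filter, Finset.mem_Icc]; exact ⟨⟨by omega, hiN⟩, h⟩
      have := Finset.le_max' F i this
      omega
    have : dist (x i) (x b) ≤ dist (x i) (x a) := by
      have h1 : dist (x i) (x b) ^ 2 ≤ dist (x i) (x a) ^ 2 := by simp only [hD] at hDi; linarith
      nlinarith [dist_nonneg (x := x i) (y := x a), dist_nonneg (x := x i) (y := x b)]
    exact Real.rpow_le_rpow dist_nonneg this hα.le
  -- sum comparison
  have hCu := C_union N x j hj1 hjN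
  have hCd := C_disjoint N x hsort j hjN
  calc fCost α (C x 1 j) + fCost α (C x (j + 1) N)
      ≤ (∑ z ∈ C x 1 j, dist z (x a) ^ α) + ∑ z ∈ C x (j + 1) N, dist z (x b) ^ α :=
        add_le_add (fCost_le α hxaC) (fCost_le α hxbC)
    _ = ∑ z ∈ (Finset.Icc 1 N).image x,
          if z ∈ C x 1 j then dist z (x a) ^ α else dist z (x b) ^ α := sum_split hCd hCu _ _
    _ ≤ ∑ z ∈ (Finset.Icc 1 N).image x,
          if z ∈ P₁ then dist z (x a) ^ α else dist z (x b) ^ α := by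
        apply Finset.sum_le_sum
        intro z hz
        obtain ⟨i, hi, rfl⟩ := Finset.mem_image.mp hz
        rw [Finset.mem_Icc] at hi
        by_cases hC : x i ∈ C x 1 j
        · rw [if_pos hC]
          obtain ⟨i', hi', he⟩ := Finset.mem_image.mp hC
          rw [Finset.mem_Icc] at hi'
          by_cases hP : x i ∈ P₁
          · rw [if_pos hP]
          · rw [if_neg hP]
            calc dist (x i) (x a) ^ α = dist (x i') (x a) ^ α := by rw [he]
              _ ≤ dist (x i') (x b) ^ α := hleft i' hi'.1 hi'.2
              _ = dist (x i) (x b) ^ α := by rw [he]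
        · rw [if_neg hC]
          have hij : j < i := by
            by_contra h
            push_neg at h
            exact hC (Finset.mem_image_of_mem x (Finset.mem_Icc.mpr ⟨hi.1, h⟩))
          by_cases hP : x i ∈ P₁
          · rw [if_pos hP]
            exact hright i hij hi.2
          · rw [if_neg hP]
    _ = ∑ z ∈ P₁, dist z (x a) ^ α + ∑ z ∈ P₂, dist z (x b) ^ α := (sum_split hd hu _ _).symm

/-- On a sorted 2d Pareto front with `N ≥ 2` points, the minimum of `f_α(P₁) + f_α(P₂)`
over all partitions of `E` into two nonempty subsets equals the minimum over
`j ∈ [1, N−1]` of `f_α(C_{1,j}) + f_α(C_{j+1,N})`. -/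
theorem twoMed_interval_min (α : ℝ) (hα : 0 < α) (N : ℕ) (hN : 2 ≤ N) (x : ℕ → E2)
    (hsort : ∀ i j, 1 ≤ i → i < j → j ≤ N → x i 0 < x j 0 ∧ x j 1 < x i 1) :
    sInf {v : ℝ | ∃ P₁ P₂ : Finset E2, P₁.Nonempty ∧ P₂.Nonempty ∧ Disjoint P₁ P₂ ∧
        P₁ ∪ P₂ = (Finset.Icc 1 N).image x ∧ v = fCost α P₁ + fCost α P₂} =
    sInf {v : ℝ | ∃ j, 1 ≤ j ∧ j ≤ N - 1 ∧
        v = fCost α (C x 1 j) + fCost α (C x (j + 1) N)} := by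
  set S₁ := {v : ℝ | ∃ P₁ P₂ : Finset E2, P₁.Nonempty ∧ P₂.Nonempty ∧ Disjoint P₁ P₂ ∧
        P₁ ∪ P₂ = (Finset.Icc 1 N).image x ∧ v = fCost α P₁ + fCost α P₂} with hS₁
  set S₂ := {v : ℝ | ∃ j, 1 ≤ j ∧ j ≤ N - 1 ∧
        v = fCost α (C x 1 j) + fCost α (C x (j + 1) N)} with hS₂
  have hbdd₁ : BddBelow S₁ := by
    refine ⟨0, ?_⟩
    rintro v ⟨P₁, P₂, _, _, _, _, rfl⟩
    exact add_nonneg (fCost_nonneg α P₁) (fCost_nonneg α P₂)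
  have hbdd₂ : BddBelow S₂ := by
    refine ⟨0, ?_⟩
    rintro v ⟨j, _, _, rfl⟩
    exact add_nonneg (fCost_nonneg _ _) (fCost_nonneg _ _)
  have hsub : S₂ ⊆ S₁ := by
    rintro v ⟨j, hj1, hjN1, rfl⟩
    have hjN : j ≤ N := by omega
    refine ⟨C x 1 j, C x (j + 1) N, ?_, ?_, C_disjoint N x hsort j hjN,
      C_union N x j hj1 hjN, rfl⟩
    · exact ⟨x 1, Finset.mem_image_of_mem x (Finset.mem_Icc.mpr ⟨le_refl 1, hj1⟩)⟩
    · exact ⟨x N, Finset.mem_image_of_mem x (Finset.mem_Icc.mpr ⟨by omega, le_refl N⟩)⟩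
  have hne₂ : S₂.Nonempty := ⟨_, 1, le_refl 1, by omega, rfl⟩
  have hne₁ : S₁.Nonempty := hne₂.mono hsub
  apply le_antisymm
  · exact csInf_le_csInf hbdd₁ hne₂ hsub
  · apply le_csInf hne₁
    rintro v ⟨P₁, P₂, h1, h2, hd, hu, rfl⟩
    obtain ⟨y₁, hy₁, he₁⟩ := exists_medoid α h1
    obtain ⟨y₂, hy₂, he₂⟩ := exists_medoid α h2
    have hy₁E : y₁ ∈ (Finset.Icc 1 N).image x := hu ▸ Finset.mem_union_left _ hy₁
    have hy₂E : y₂ ∈ (Finset.Icc 1 N).image x := hu ▸ Finset.mem_union_right _ hy₂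
    obtain ⟨a, haI, rfl⟩ := Finset.mem_image.mp hy₁E
    obtain ⟨b, hbI, rfl⟩ := Finset.mem_image.mp hy₂E
    have hab : a ≠ b := by
      rintro rfl
      exact Finset.disjoint_left.mp hd hy₁ hy₂
    rcases hab.lt_or_gt with h | h
    · obtain ⟨j, hj1, hjN1, hle⟩ := core α hα N x hsort P₁ P₂ hd hu a b haI hbI h hy₁ hy₂
      have : fCost α (C x 1 j) + fCost α (C x (j + 1) N) ∈ S₂ := ⟨j, hj1, hjN1, rfl⟩
      calc sInf S₂ ≤ _ := csInf_le hbdd₂ this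
        _ ≤ _ := hle
        _ = fCost α P₁ + fCost α P₂ := by rw [he₁, he₂]
    · obtain ⟨j, hj1, hjN1, hle⟩ := core α hα N x hsort P₂ P₁ hd.symm
        (by rw [Finset.union_comm]; exact hu) b a hbI haI h hy₂ hy₁
      have : fCost α (C x 1 j) + fCost α (C x (j + 1) N) ∈ S₂ := ⟨j, hj1, hjN1, rfl⟩
      calc sInf S₂ ≤ _ := csInf_le hbdd₂ this
        _ ≤ _ := hle
        _ = fCost α P₁ + fCost α P₂ := by rw [he₁, he₂, add_comm]
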